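/- The group G = ⟨x, z | xᵐz = zxᵐ⟩ has center equal to the cyclic subgroup generated by xᵐ, which is infinite cyclic, and the quotient G/⟨xᵐ⟩ is isomorphic to the free product (ℤ/m) * ℤ. -/

import Mathlib

/-- The group `⟨x, z | xᵐ z = z xᵐ⟩` (fundamental group of the complement of a
torus knot in the solid torus). -/
def solidTorusRels (m : ℕ) : Set (FreeGroup (Fin 2)) :=
  {FreeGroup.of 0 ^ m * FreeGroup.of 1 * (FreeGroup.of 1 * FreeGroup.of 0 ^ m)⁻¹}

open Monoid

/-- The center of a free product of nontrivial groups (over an index type in which every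
element has a distinct companion) is trivial. -/
theorem coprodI_center_eq_bot {ι : Type*} {G : ι → Type*} [∀ i, Group (G i)]
    [hn : ∀ i, Nontrivial (G i)] (h2 : ∀ i : ι, ∃ j, j ≠ i) :
    Subgroup.center (Monoid.CoprodI G) = ⊥ := by
  classical
  rw [eq_bot_iff]
  intro g hg
  rw [Subgroup.mem_bot]
  by_contra hg1
  have hprod_inj : Function.Injective (CoprodI.Word.prod : CoprodI.Word G → CoprodI G) :=
    CoprodI.Word.equiv.symm.injective
  have hgprod : (CoprodI.Word.equiv g).prod = g := CoprodI.Word.equiv.symm_apply_apply g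
  have hwne : CoprodI.Word.equiv g ≠ CoprodI.Word.empty := by
    intro h
    apply hg1
    rw [← hgprod, h, CoprodI.Word.prod_empty]
  obtain ⟨i, j, w', hw'⟩ := CoprodI.NeWord.of_word (CoprodI.Word.equiv g) hwne
  have hgw : w'.prod = g := by
    rw [CoprodI.NeWord.prod, hw', hgprod]
  obtain ⟨k, hk⟩ := h2 j
  obtain ⟨c, hc⟩ := exists_ne (1 : G k)
  have hcomm : CoprodI.of c * g = g * CoprodI.of c :=
    Subgroup.mem_center_iff.mp hg (CoprodI.of c)
  set big : CoprodI.NeWord G i i :=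
    (w'.append (Ne.symm hk) (CoprodI.NeWord.singleton c hc)).append hk w'.inv with hbig
  have hbigprod : big.prod = (CoprodI.NeWord.singleton c hc).prod := by
    rw [hbig, CoprodI.NeWord.append_prod, CoprodI.NeWord.append_prod,
      CoprodI.NeWord.inv_prod, CoprodI.NeWord.prod_singleton,
      hgw, ← hcomm, mul_inv_cancel_right]
  have hbigword : big.toWord = (CoprodI.NeWord.singleton c hc).toWord :=
    hprod_inj hbigprod
  have hlen : big.toList.length = 1 :=
    congrArg (fun w : CoprodI.Word G => w.toList.length) hbigword
  simp only [hbig, CoprodI.NeWord.toList, List.length_append, List.length_singleton] at hlen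
  have hne1 := w'.toList_ne_nil
  have hne2 := w'.inv.toList_ne_nil
  have hl1 : 0 < w'.toList.length := List.length_pos_iff.mpr hne1
  have hl2 : 0 < w'.inv.toList.length := List.length_pos_iff.mpr hne2
  omega

/-- Monoid homomorphisms from `Multiplicative (ZMod m)` into a group are determined by the
image of `ofAdd 1`. -/
theorem mult_zmod_hom_ext {m : ℕ} {P : Type*} [Group P]
    {f g : Multiplicative (ZMod m) →* P}
    (h : f (Multiplicative.ofAdd 1) = g (Multiplicative.ofAdd 1)) : f = g := by
  refine MonoidHom.ext fun x => ?_
  obtain ⟨n, hn⟩ := ZMod.intCast_surjective (Multiplicative.toAdd x)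
  have hx : x = Multiplicative.ofAdd (1 : ZMod m) ^ n := by
    rw [← ofAdd_zsmul, zsmul_one, hn]
    exact (ofAdd_toAdd x).symm
  rw [hx, map_zpow, map_zpow, h]

namespace Stmt12Aux

variable (m : ℕ)

/-- The two-element family `(ℤ/m, ℤ)` (multiplicatively). -/
abbrev K : Bool → Type := fun b => cond b (Multiplicative (ZMod m)) (Multiplicative ℤ)

instance : ∀ b, Group (K m b) := by
  rintro (_ | _)
  · exact inferInstanceAs (Group (Multiplicative ℤ))
  · exact inferInstanceAs (Group (Multiplicative (ZMod m)))

/-- The maps `K b →* (ℤ/m) ∗ ℤ`. -/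
def toCop : ∀ b, K m b →* Coprod (Multiplicative (ZMod m)) (Multiplicative ℤ)
  | true => Coprod.inl
  | false => Coprod.inr

/-- `CoprodI K ≃* Coprod (ℤ/m) ℤ`. -/
noncomputable def coprodIEquivCoprod :
    CoprodI (K m) ≃* Coprod (Multiplicative (ZMod m)) (Multiplicative ℤ) := by
  refine MonoidHom.toMulEquiv (CoprodI.lift (toCop m))
    (Coprod.lift (CoprodI.of (M := K m) (i := true)) (CoprodI.of (M := K m) (i := false))) ?_ ?_
  · apply CoprodI.ext_hom
    rintro (_ | _)
    · refine MonoidHom.ext fun x => ?_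
      simp only [MonoidHom.comp_apply, MonoidHom.id_apply, CoprodI.lift_of]
      exact Coprod.lift_apply_inr _ _ x
    · refine MonoidHom.ext fun x => ?_
      simp only [MonoidHom.comp_apply, MonoidHom.id_apply, CoprodI.lift_of]
      exact Coprod.lift_apply_inl _ _ x
  · apply Coprod.hom_ext
    · refine MonoidHom.ext fun x => ?_
      simp only [MonoidHom.comp_apply, MonoidHom.id_apply, Coprod.lift_apply_inl]
      exact CoprodI.lift_of (toCop m) (i := true) x
    · refine MonoidHom.ext fun x => ?_
      simp only [MonoidHom.comp_apply, MonoidHom.id_apply, Coprod.lift_apply_inr]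
      exact CoprodI.lift_of (toCop m) (i := false) x

end Stmt12Aux

open Stmt12Aux in
/-- for `m ≥ 2`, the group `G = ⟨x, z | xᵐz = zxᵐ⟩` has center the
infinite cyclic subgroup `⟨xᵐ⟩`, and `G/⟨xᵐ⟩ ≅ (ℤ/m) * ℤ`. -/
theorem stmt12 (m : ℕ) (hm : 2 ≤ m) :
    Subgroup.center (PresentedGroup (solidTorusRels m)) =
      Subgroup.zpowers ((PresentedGroup.of 0 : PresentedGroup (solidTorusRels m)) ^ m) ∧
    Nonempty ((Subgroup.center (PresentedGroup (solidTorusRels m))) ≃* Multiplicative ℤ) ∧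
    Nonempty ((PresentedGroup (solidTorusRels m) ⧸
        Subgroup.center (PresentedGroup (solidTorusRels m))) ≃*
      Monoid.Coprod (Multiplicative (ZMod m)) (Multiplicative ℤ)) := by
  haveI : Fact (1 < m) := ⟨hm⟩
  haveI : NeZero m := ⟨by omega⟩
  set G := PresentedGroup (solidTorusRels m) with hG
  let X : G := PresentedGroup.of 0
  let Z : G := PresentedGroup.of 1
  -- The defining relation
  have hrel : X ^ m * Z = Z * X ^ m := by
    have h1 : PresentedGroup.mk (solidTorusRels m)
        (FreeGroup.of 0 ^ m * FreeGroup.of 1 * (FreeGroup.of 1 * FreeGroup.of 0 ^ m)⁻¹) = 1 :=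
      (QuotientGroup.eq_one_iff _).mpr (Subgroup.subset_normalClosure rfl)
    rw [map_mul, map_inv, map_mul, map_mul, map_pow, mul_inv_eq_one] at h1
    exact h1
  -- x^m is central
  have hX : X ^ m ∈ Subgroup.center G := by
    have hcent : ∀ g : G, X ^ m * g = g * X ^ m := by
      intro g
      have hg : g ∈ Subgroup.centralizer {X ^ m} := by
        refine PresentedGroup.generated_by _ _ ?_ g
        intro j
        rw [Subgroup.mem_centralizer_iff]
        intro h hh
        rw [Set.mem_singleton_iff] at hh
        subst hh
        fin_cases j
        · exact ((Commute.refl X).pow_left m).eq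
        · exact hrel
      exact Subgroup.mem_centralizer_iff.mp hg _ (Set.mem_singleton _)
    exact Subgroup.mem_center_iff.mpr fun g => (hcent g).symm
  -- the degree homomorphism, detecting the order of x
  have hdegrel : ∀ r ∈ solidTorusRels m,
      FreeGroup.lift (fun i : Fin 2 =>
        if i = 0 then Multiplicative.ofAdd (1 : ℤ) else 1) r = 1 := by
    intro r hr
    rw [solidTorusRels, Set.mem_singleton_iff] at hr
    subst hr
    simp [mul_comm]
  let deg : G →* Multiplicative ℤ := PresentedGroup.toGroup hdegrel
  have hdegX : deg X = Multiplicative.ofAdd (1 : ℤ) := by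
    show PresentedGroup.toGroup hdegrel (PresentedGroup.of 0) = _
    simp
  have hminj : Function.Injective ((zpowersHom G) (X ^ m)) := by
    intro a b hab
    simp only [zpowersHom_apply] at hab
    have h2 := congrArg deg hab
    simp only [← zpow_natCast, ← zpow_mul, map_zpow, hdegX, ← ofAdd_zsmul, smul_eq_mul,
      mul_one] at h2
    have h3 := congrArg Multiplicative.toAdd h2
    simp only [toAdd_ofAdd] at h3
    have hm0 : (m : ℤ) ≠ 0 := by exact_mod_cast (by omega : m ≠ 0)
    have : Multiplicative.toAdd a = Multiplicative.toAdd b := by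
      exact mul_left_cancel₀ hm0 h3
    exact Multiplicative.toAdd.injective this
  have hrange : ((zpowersHom G) (X ^ m)).range = Subgroup.zpowers (X ^ m) := by
    ext g
    simp only [MonoidHom.mem_range, Subgroup.mem_zpowers_iff, zpowersHom_apply]
    exact ⟨fun ⟨n, h⟩ => ⟨Multiplicative.toAdd n, h⟩,
      fun ⟨k, h⟩ => ⟨Multiplicative.ofAdd k, h⟩⟩
  let eC : Multiplicative ℤ ≃* Subgroup.zpowers (X ^ m) :=
    (MonoidHom.ofInjective hminj).trans (MulEquiv.subgroupCongr hrange)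
  -- the subgroup N is normal
  have hle : Subgroup.zpowers (X ^ m) ≤ Subgroup.center G := Subgroup.zpowers_le.mpr hX
  haveI hN : (Subgroup.zpowers (X ^ m)).Normal := by
    constructor
    intro n hn g
    rw [Subgroup.mem_center_iff.mp (hle hn) g, mul_inv_cancel_right]
    exact hn
  -- the homomorphism to the free product
  have h1m : (Multiplicative.ofAdd (1 : ZMod m)) ^ m = 1 := by
    rw [← ofAdd_nsmul, nsmul_eq_mul, mul_one, ZMod.natCast_self, ofAdd_zero]
  have h1m' : ∀ x : K m true, x ^ m = 1 → (CoprodI.of (M := K m) x) ^ m = 1 := by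
    intro x hx
    rw [← map_pow, hx, map_one]
  have honeK : (CoprodI.of (M := K m) (i := true) (Multiplicative.ofAdd (1 : ZMod m))) ^ m
      = 1 := h1m' _ h1m
  have hΦrel : ∀ r ∈ solidTorusRels m,
      FreeGroup.lift (fun i : Fin 2 =>
        if i = 0 then CoprodI.of (M := K m) (i := true) (Multiplicative.ofAdd (1 : ZMod m))
        else CoprodI.of (M := K m) (i := false) (Multiplicative.ofAdd (1 : ℤ))) r = 1 := by
    intro r hr
    rw [solidTorusRels, Set.mem_singleton_iff] at hr
    subst hr
    simp only [map_mul, map_inv, map_pow, FreeGroup.lift_apply_of]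
    simp only [if_pos, if_neg]
    rw [honeK]
    simp
  let Φ : G →* CoprodI (K m) := PresentedGroup.toGroup hΦrel
  have hΦX : Φ X = CoprodI.of (M := K m) (i := true) (Multiplicative.ofAdd (1 : ZMod m)) := by
    show PresentedGroup.toGroup hΦrel (PresentedGroup.of 0) = _
    simp
  have hΦZ : Φ Z = CoprodI.of (M := K m) (i := false) (Multiplicative.ofAdd (1 : ℤ)) := by
    show PresentedGroup.toGroup hΦrel (PresentedGroup.of 1) = _
    simp
  have hΦXm : Φ (X ^ m) = 1 := by rw [map_pow, hΦX, honeK]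
  have hkerΦ : ∀ g ∈ Subgroup.zpowers (X ^ m), Φ g = 1 := by
    intro g hg
    obtain ⟨k, rfl⟩ := Subgroup.mem_zpowers_iff.mp hg
    rw [map_zpow, hΦXm, one_zpow]
  let N := Subgroup.zpowers (X ^ m)
  let Φbar : G ⧸ N →* CoprodI (K m) := QuotientGroup.lift N Φ hkerΦ
  let Xbar : G ⧸ N := QuotientGroup.mk' N X
  let Zbar : G ⧸ N := QuotientGroup.mk' N Z
  have hXbarm : Xbar ^ m = 1 := by
    rw [← map_pow]
    exact (QuotientGroup.eq_one_iff _).mpr (Subgroup.mem_zpowers _)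
  -- the inverse homomorphism
  have hfXcond : (zmultiplesHom (Additive (G ⧸ N)) (Additive.ofMul Xbar)) (m : ℤ) = 0 := by
    rw [zmultiplesHom_apply, ← ofMul_zpow, zpow_natCast, hXbarm, ofMul_one]
  let fX : Multiplicative (ZMod m) →* G ⧸ N :=
    AddMonoidHom.toMultiplicativeLeft
      (ZMod.lift m ⟨zmultiplesHom (Additive (G ⧸ N)) (Additive.ofMul Xbar), hfXcond⟩)
  let fZ : Multiplicative ℤ →* G ⧸ N := (zpowersHom (G ⧸ N)) Zbar
  have hfX1 : fX (Multiplicative.ofAdd (1 : ZMod m)) = Xbar := by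
    show Additive.toMul
      ((ZMod.lift m ⟨zmultiplesHom (Additive (G ⧸ N)) (Additive.ofMul Xbar), hfXcond⟩)
        (1 : ZMod m)) = Xbar
    rw [show (1 : ZMod m) = ((1 : ℤ) : ZMod m) by rw [Int.cast_one], ZMod.lift_coe]
    simp [zmultiplesHom_apply]
  have hfZ1 : fZ (Multiplicative.ofAdd (1 : ℤ)) = Zbar := by
    simp [fZ, zpowersHom_apply]
  let Ψ : CoprodI (K m) →* G ⧸ N :=
    CoprodI.lift (Bool.rec (motive := fun b => K m b →* G ⧸ N) fZ fX)
  have hΨX : Ψ (CoprodI.of (M := K m) (i := true) (Multiplicative.ofAdd (1 : ZMod m)))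
      = Xbar := by
    exact (CoprodI.lift_of (M := K m) (Bool.rec (motive := fun b => K m b →* G ⧸ N) fZ fX) _).trans hfX1
  have hΨZ : Ψ (CoprodI.of (M := K m) (i := false) (Multiplicative.ofAdd (1 : ℤ)))
      = Zbar := by
    exact (CoprodI.lift_of (M := K m) (Bool.rec (motive := fun b => K m b →* G ⧸ N) fZ fX) _).trans hfZ1
  have h1 : Ψ.comp Φbar = MonoidHom.id (G ⧸ N) := by
    apply QuotientGroup.monoidHom_ext
    refine PresentedGroup.ext fun i => ?_
    fin_cases i
    · show Ψ (Φbar (QuotientGroup.mk' N X)) = QuotientGroup.mk' N X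
      rw [show Φbar (QuotientGroup.mk' N X) = Φ X from rfl, hΦX, hΨX]
    · show Ψ (Φbar (QuotientGroup.mk' N Z)) = QuotientGroup.mk' N Z
      rw [show Φbar (QuotientGroup.mk' N Z) = Φ Z from rfl, hΦZ, hΨZ]
  have h2 : Φbar.comp Ψ = MonoidHom.id (CoprodI (K m)) := by
    apply CoprodI.ext_hom
    rintro (_ | _)
    · -- b = false : Multiplicative ℤ
      refine MonoidHom.ext_mint ?_
      show Φbar (Ψ (CoprodI.of (M := K m) (i := false) (Multiplicative.ofAdd (1 : ℤ)))) = _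
      rw [hΨZ, show Φbar Zbar = Φ Z from rfl, hΦZ]
      rfl
    · -- b = true : Multiplicative (ZMod m)
      refine mult_zmod_hom_ext ?_
      show Φbar (Ψ (CoprodI.of (M := K m) (i := true)
        (Multiplicative.ofAdd (1 : ZMod m)))) = _
      rw [hΨX, show Φbar Xbar = Φ X from rfl, hΦX]
      rfl
  let e : (G ⧸ N) ≃* CoprodI (K m) := MonoidHom.toMulEquiv Φbar Ψ h1 h2
  -- trivial center of the free product
  haveI : ∀ b, Nontrivial (K m b) := by
    rintro (_ | _)
    · exact inferInstanceAs (Nontrivial (Multiplicative ℤ))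
    · exact inferInstanceAs (Nontrivial (Multiplicative (ZMod m)))
  have hbot : Subgroup.center (CoprodI (K m)) = ⊥ :=
    coprodI_center_eq_bot fun i => ⟨!i, by cases i <;> simp⟩
  -- the center is exactly ⟨x^m⟩
  have hle2 : Subgroup.center G ≤ N := by
    intro g hg
    have hgQ : ∀ q : G ⧸ N, q * (QuotientGroup.mk' N g) = (QuotientGroup.mk' N g) * q := by
      intro q
      obtain ⟨a, rfl⟩ := QuotientGroup.mk'_surjective N q
      rw [← map_mul, ← map_mul, Subgroup.mem_center_iff.mp hg a]
    have hcen : e (QuotientGroup.mk' N g) ∈ Subgroup.center (CoprodI (K m)) := by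
      rw [Subgroup.mem_center_iff]
      intro h
      calc h * e (QuotientGroup.mk' N g)
          = e (e.symm h * QuotientGroup.mk' N g) := by rw [map_mul, e.apply_symm_apply]
        _ = e (QuotientGroup.mk' N g * e.symm h) := by rw [hgQ]
        _ = e (QuotientGroup.mk' N g) * h := by rw [map_mul, e.apply_symm_apply]
    rw [hbot, Subgroup.mem_bot] at hcen
    have hq1 : QuotientGroup.mk' N g = 1 := by
      apply e.injective
      rw [hcen, map_one]
    exact (QuotientGroup.eq_one_iff g).mp hq1
  have part1 : Subgroup.center G = N := le_antisymm hle2 hle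
  refine ⟨part1, ⟨(MulEquiv.subgroupCongr part1).trans eC.symm⟩,
    ⟨((QuotientGroup.quotientMulEquivOfEq part1).trans e).trans (coprodIEquivCoprod m)⟩⟩
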